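/- Fix an integer d ≥ 4 and reals μ > 0, C > 0, E. The effective potential V_eff(r) := (C/r²)(1 − μ r^(3−d)) − E² has two distinct zeros in the open interval (r_H, ∞), where r_H := μ^(1/(d−3)), if and only if E ≠ 0 and V_eff(r_P) > 0, where r_P := (μ(d−1)/2)^(1/(d−3)). -/

import Mathlib

/-!
Write `k = d - 3 > 0`. On `r > 0` the derivative of `V_eff` is
`C r⁻³ (μ (k + 2) r^(-k) - 2)`, positive before the photon sphere `r_P` and negative after it, so
`V_eff` rises strictly on `(0, r_P]` and falls strictly on `[r_P, ∞)`. Two distinct zeros then force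
a strictly positive maximum `V_eff(r_P)`; and a zero beyond the horizon forces `E ≠ 0`, because
`V_eff + E²` vanishes at `r_H` and is positive beyond it. Conversely, if `E ≠ 0` then
`V_eff(r_H) = -E² < 0` and `V_eff(r) → -E² < 0` as `r → ∞`, so when `V_eff(r_P) > 0` the
intermediate value theorem gives one zero on each side of `r_P`.
-/

open Set Filter Topology

namespace Real

lemma rpow_one_div_rpow_neg {x : ℝ} (hx : 0 ≤ x) {k : ℝ} (hk : k ≠ 0) :
    (x ^ (1 / k)) ^ (-k) = x⁻¹ := by
  rw [rpow_neg (rpow_nonneg hx _), one_div, rpow_inv_rpow hx hk]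

end Real

/-- Here `k` plays the role of `d - 3`. -/
noncomputable def effPotential (k μ C E r : ℝ) : ℝ :=
  C / r ^ 2 * (1 - μ * r ^ (-k)) - E ^ 2

noncomputable def horizonRadius (k μ : ℝ) : ℝ := μ ^ (1 / k)

noncomputable def photonSphereRadius (k μ : ℝ) : ℝ := (μ * (k + 2) / 2) ^ (1 / k)

section EffPotential

open Real

variable {k μ C : ℝ} (E : ℝ)

lemma horizonRadius_lt_photonSphereRadius (hk : 0 < k) (hμ : 0 < μ) :
    horizonRadius k μ < photonSphereRadius k μ :=
  rpow_lt_rpow hμ.le (by nlinarith) (by positivity)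

lemma horizonRadius_pos (hμ : 0 < μ) : 0 < horizonRadius k μ :=
  rpow_pos_of_pos hμ _

lemma photonSphereRadius_pos (hk : 0 < k) (hμ : 0 < μ) : 0 < photonSphereRadius k μ := by
  unfold photonSphereRadius; positivity

lemma effPotential_horizonRadius (hk : k ≠ 0) (hμ : 0 < μ) :
    effPotential k μ C E (horizonRadius k μ) = -E ^ 2 := by
  rw [effPotential, horizonRadius, rpow_one_div_rpow_neg hμ.le hk, mul_inv_cancel₀ hμ.ne']
  ring

lemma neg_sq_lt_effPotential (hk : 0 < k) (hμ : 0 < μ) (hC : 0 < C) {r : ℝ}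
    (hr : horizonRadius k μ < r) : -E ^ 2 < effPotential k μ C E r := by
  have hrH := horizonRadius_pos (k := k) hμ
  have hr₀ : 0 < r := hrH.trans hr
  have hμr : μ * r ^ (-k) < 1 := by
    calc μ * r ^ (-k) < μ * horizonRadius k μ ^ (-k) :=
          mul_lt_mul_of_pos_left (rpow_lt_rpow_of_neg hrH hr (neg_neg_of_pos hk)) hμ
      _ = 1 := by rw [horizonRadius, rpow_one_div_rpow_neg hμ.le hk.ne', mul_inv_cancel₀ hμ.ne']
  have : 0 < C / r ^ 2 * (1 - μ * r ^ (-k)) := mul_pos (by positivity) (by linarith)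
  rw [effPotential]
  linarith

lemma hasDerivAt_effPotential {r : ℝ} (hr : 0 < r) :
    HasDerivAt (effPotential k μ C E) (C / r ^ 3 * (μ * (k + 2) * r ^ (-k) - 2)) r := by
  have hsq : HasDerivAt (fun x : ℝ => x ^ 2) (2 * r) r := by simpa using hasDerivAt_pow 2 r
  have hinvSq : HasDerivAt (fun x : ℝ => C / x ^ 2) ((0 * r ^ 2 - C * (2 * r)) / (r ^ 2) ^ 2) r :=
    (hasDerivAt_const r C).div hsq (pow_ne_zero 2 hr.ne')
  have hlapse : HasDerivAt (fun x : ℝ => 1 - μ * x ^ (-k)) (-(μ * (-k * r ^ (-k - 1)))) r :=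
    ((hasDerivAt_rpow_const (Or.inl hr.ne')).const_mul μ).const_sub 1
  refine ((hinvSq.mul hlapse).sub_const (E ^ 2)).congr_deriv ?_
  rw [rpow_sub hr, rpow_one]
  field_simp
  ring

lemma continuousOn_effPotential : ContinuousOn (effPotential k μ C E) (Ioi 0) :=
  fun _ hr => (hasDerivAt_effPotential E hr).continuousAt.continuousWithinAt

lemma mul_photonSphereRadius_rpow_neg (hk : 0 < k) (hμ : 0 < μ) :
    μ * (k + 2) * photonSphereRadius k μ ^ (-k) = 2 := by
  rw [photonSphereRadius, rpow_one_div_rpow_neg (by positivity) hk.ne', inv_div,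
    mul_div_cancel₀ _ (by positivity)]

lemma strictMonoOn_effPotential (hk : 0 < k) (hμ : 0 < μ) (hC : 0 < C) :
    StrictMonoOn (effPotential k μ C E) (Ioc 0 (photonSphereRadius k μ)) := by
  refine strictMonoOn_of_deriv_pos (convex_Ioc _ _)
    ((continuousOn_effPotential E).mono Ioc_subset_Ioi_self) fun r hr => ?_
  rw [interior_Ioc] at hr
  rw [(hasDerivAt_effPotential E hr.1).deriv]
  have : 2 < μ * (k + 2) * r ^ (-k) := by
    simpa only [mul_photonSphereRadius_rpow_neg hk hμ] using mul_lt_mul_of_pos_left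
      (rpow_lt_rpow_of_neg hr.1 hr.2 (neg_neg_of_pos hk)) (by positivity : 0 < μ * (k + 2))
  exact mul_pos (div_pos hC (pow_pos hr.1 3)) (by linarith)

lemma strictAntiOn_effPotential (hk : 0 < k) (hμ : 0 < μ) (hC : 0 < C) :
    StrictAntiOn (effPotential k μ C E) (Ici (photonSphereRadius k μ)) := by
  have hrP := photonSphereRadius_pos hk hμ
  refine strictAntiOn_of_deriv_neg (convex_Ici _)
    ((continuousOn_effPotential E).mono fun r hr => hrP.trans_le hr) fun r hr => ?_
  rw [interior_Ici] at hr
  have hr₀ : 0 < r := hrP.trans hr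
  rw [(hasDerivAt_effPotential E hr₀).deriv]
  have : μ * (k + 2) * r ^ (-k) < 2 := by
    simpa only [mul_photonSphereRadius_rpow_neg hk hμ] using mul_lt_mul_of_pos_left
      (rpow_lt_rpow_of_neg hrP hr (neg_neg_of_pos hk)) (by positivity : 0 < μ * (k + 2))
  exact mul_neg_of_pos_of_neg (div_pos hC (pow_pos hr₀ 3)) (by linarith)

lemma tendsto_effPotential_atTop (hk : 0 < k) :
    Tendsto (effPotential k μ C E) atTop (𝓝 (-E ^ 2)) := by
  have hinvSq : Tendsto (fun r : ℝ => C / r ^ 2) atTop (𝓝 0) :=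
    tendsto_const_nhds.div_atTop (tendsto_pow_atTop two_ne_zero)
  have hlapse : Tendsto (fun r : ℝ => 1 - μ * r ^ (-k)) atTop (𝓝 (1 - μ * 0)) :=
    tendsto_const_nhds.sub (tendsto_const_nhds.mul (tendsto_rpow_neg_atTop hk))
  unfold effPotential
  simpa only [zero_mul, zero_sub] using (hinvSq.mul hlapse).sub_const (E ^ 2)

end EffPotential

lemma lt_of_eq_of_strictMonoOn_Ioc_of_strictAntiOn_Ici {f : ℝ → ℝ} {a p x y : ℝ}
    (hmono : StrictMonoOn f (Ioc a p)) (hanti : StrictAntiOn f (Ici p))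
    (hax : a < x) (hxy : x < y) (hfxy : f x = f y) : f y < f p := by
  rcases le_or_gt y p with hyp | hpy
  · exact absurd hfxy (hmono ⟨hax, hxy.le.trans hyp⟩ ⟨hax.trans hxy, hyp⟩ hxy).ne
  rcases le_or_gt p x with hpx | hxp
  · exact absurd hfxy (hanti hpx (hpx.trans hxy.le) hxy).ne'
  · exact hanti self_mem_Ici hpy.le hpy

/-- Fix an integer `d ≥ 4` and reals `μ > 0`, `C > 0`, `E`. The effective potential
`V_eff(r) = (C/r²)(1 − μ r^(3−d)) − E²` has two distinct zeros in the open interval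
`(r_H, ∞)`, where `r_H = μ^(1/(d−3))`, if and only if `E ≠ 0` and `V_eff(r_P) > 0`,
where `r_P = (μ(d−1)/2)^(1/(d−3))`. -/
theorem two_zeros_iff (d : ℕ) (hd : 4 ≤ d) (μ C E : ℝ)
    (hμ : 0 < μ) (hC : 0 < C)
    (Veff : ℝ → ℝ)
    (hV : ∀ r : ℝ, Veff r = (C / r ^ 2) * (1 - μ * r ^ ((3 : ℝ) - d)) - E ^ 2)
    (rH : ℝ) (hrH : rH = μ ^ ((1 : ℝ) / ((d : ℝ) - 3)))
    (rP : ℝ) (hrP : rP = (μ * ((d : ℝ) - 1) / 2) ^ ((1 : ℝ) / ((d : ℝ) - 3))) :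
    (∃ r₁ r₂ : ℝ, r₁ ∈ Set.Ioi rH ∧ r₂ ∈ Set.Ioi rH ∧ r₁ ≠ r₂ ∧
        Veff r₁ = 0 ∧ Veff r₂ = 0) ↔
      (E ≠ 0 ∧ 0 < Veff rP) := by
  have hk : 0 < (d : ℝ) - 3 := by have : (4 : ℝ) ≤ d := mod_cast hd; linarith
  rw [show (3 : ℝ) - d = -((d : ℝ) - 3) by ring] at hV
  rw [show (d : ℝ) - 1 = (d : ℝ) - 3 + 2 by ring] at hrP
  generalize (d : ℝ) - 3 = k at hk hV hrH hrP
  obtain rfl : Veff = effPotential k μ C E := funext hV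
  obtain rfl : rH = horizonRadius k μ := hrH
  obtain rfl : rP = photonSphereRadius k μ := hrP
  have hrH₀ := horizonRadius_pos (k := k) hμ
  have hHP := horizonRadius_lt_photonSphereRadius hk hμ
  have hmono := strictMonoOn_effPotential E hk hμ hC
  have hanti := strictAntiOn_effPotential E hk hμ hC
  constructor
  · rintro ⟨r₁, r₂, h₁, h₂, hne, hz₁, hz₂⟩
    have hE : -E ^ 2 < 0 := hz₁ ▸ neg_sq_lt_effPotential E hk hμ hC h₁
    refine ⟨fun h => by simp [h] at hE, ?_⟩
    rcases hne.lt_or_gt with h | h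
    · simpa [hz₂] using lt_of_eq_of_strictMonoOn_Ioc_of_strictAntiOn_Ici hmono hanti
        (hrH₀.trans h₁) h (hz₁.trans hz₂.symm)
    · simpa [hz₁] using lt_of_eq_of_strictMonoOn_Ioc_of_strictAntiOn_Ici hmono hanti
        (hrH₀.trans h₂) h (hz₂.trans hz₁.symm)
  · rintro ⟨hE, hP⟩
    have hE₂ : -E ^ 2 < 0 := neg_neg_of_pos (by positivity)
    have hcont : ContinuousOn (effPotential k μ C E) (Ici (horizonRadius k μ)) :=
      (continuousOn_effPotential E).mono fun r hr => hrH₀.trans_le hr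
    obtain ⟨R, hR, hPR⟩ := ((tendsto_effPotential_atTop E hk).eventually
      (gt_mem_nhds hE₂) |>.and (eventually_gt_atTop (photonSphereRadius k μ))).exists
    obtain ⟨r₁, hr₁, hz₁⟩ := intermediate_value_Ioo hHP.le (hcont.mono Icc_subset_Ici_self)
      ⟨by rwa [effPotential_horizonRadius E hk.ne' hμ], hP⟩
    obtain ⟨r₂, hr₂, hz₂⟩ := intermediate_value_Ioo' hPR.le
      (hcont.mono (Icc_subset_Ici_self.trans (Ici_subset_Ici.2 hHP.le))) ⟨hR, hP⟩
    exact ⟨r₁, r₂, hr₁.1, hHP.trans hr₂.1, (hr₁.2.trans hr₂.1).ne, hz₁, hz₂⟩
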